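/- Let A be a monotone operator on a Hilbert space H whose resolvent J_A = (I + A)^{-1} is everywhere defined. Then for any monotone operator B whose graph contains the graph of A, B = A; that is, A is maximal monotone. -/
import Mathlib

open RealInnerProductSpace

/-- Minty: a monotone operator with everywhere-defined resolvent is maximal:
any monotone extension of its graph coincides with it. -/
theorem minty_maximal {H : Type*} [NormedAddCommGroup H] [InnerProductSpace ℝ H]
    (A : H → Set H)
    (hmono : ∀ x x' u u', u ∈ A x → u' ∈ A x' → 0 ≤ ⟪x - x', u - u'⟫)
    (hsurj : ∀ y : H, ∃ x : H, y - x ∈ A x) :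
    ∀ B : H → Set H,
      (∀ x x' u u', u ∈ B x → u' ∈ B x' → 0 ≤ ⟪x - x', u - u'⟫) →
      (∀ x, A x ⊆ B x) → B = A := by
  intro B hBmono hAB
  funext x
  apply Set.Subset.antisymm _ (hAB x)
  intro u hu
  obtain ⟨z, hz⟩ := hsurj (x + u)
  have h1 : x + u - z ∈ B z := hAB z hz
  have h2 := hBmono x z u (x + u - z) hu h1
  have key : u - (x + u - z) = -(x - z) := by abel
  rw [key, inner_neg_right, real_inner_self_eq_norm_sq] at h2
  have hxz : x = z := by
    have : ‖x - z‖ ^ 2 = 0 := le_antisymm (by linarith) (by positivity)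
    have := pow_eq_zero_iff (n := 2) (by norm_num) |>.mp this
    rw [norm_eq_zero, sub_eq_zero] at this
    exact this
  subst hxz
  simpa using hz
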